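/- If Y · |S ∩ {1,…,i}| ≤ min(η, R(d(i))) for every i ∈ S, then S admits a feasible single-link schedule; moreover, there is such a schedule in which the chunks of S are downloaded in increasing index order, i.e., z(i,j) > 0 and z(i',j') > 0 with i < i' (both in S) implies j ≤ j'. -/

import Mathlib

/-!
Lay the chunks of `S`, in increasing index order, end to end on the axis of cumulative bandwidth:
chunk `i` occupies `(e(i) - Y, e(i)]` with `e(i) = Y · |S ∩ {1,…,i}|`, while slot `j` delivers
`(R(j-1), R(j)]`; chunk `i` downloads in slot `j` the length of the overlap of these segments.
The hypothesis puts chunk `i`'s segment inside `(0, min(η, R(d(i)))]`, which the slots up to `d(i)`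
cover, so the chunk is complete by its deadline. The chunk segments are disjoint, so slot `j` hands
out at most `R(j) - R(j-1) = B(j)`; and they are ordered, so the chunks are served in order.
-/

/-- Cumulative bandwidth of the link up to time `t`: `R(t) = Σ_{j=1}^t B(j)`. -/
noncomputable def cumBW (B : ℕ → ℝ) (t : ℕ) : ℝ := ∑ j ∈ Finset.Icc 1 t, B j

/-- A feasible single-link schedule for a set `S` of chunks: download amounts
`z i j ≥ 0` so that each chunk `i ∈ S` gets its full layer of size `Y` by its
deadline `d i`, respecting the per-slot bandwidth `B` and the maximum
contribution `η`. -/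
def FeasibleSchedule (Y : ℝ) (d : ℕ → ℕ) (B : ℕ → ℝ) (η : ℝ) (S : Finset ℕ) : Prop :=
  ∃ z : ℕ → ℕ → ℝ,
    (∀ i ∈ S, ∀ j, 0 ≤ z i j) ∧
    (∀ i ∈ S, ∑ j ∈ Finset.Icc 1 (d i), z i j = Y) ∧
    (∀ i ∈ S, ∀ j, (j < 1 ∨ d i < j) → z i j = 0) ∧
    (∀ j, 1 ≤ j → ∑ i ∈ S, z i j ≤ B j) ∧
    (∑ i ∈ S, ∑ j ∈ Finset.Icc 1 (d i), z i j ≤ η)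

open MeasureTheory Set

theorem sum_measureReal_inter_le {α ι : Type*} [MeasurableSpace α] {μ : Measure α}
    {S : Finset ι} {f : ι → Set α} (hd : (S : Set ι).PairwiseDisjoint f)
    (hm : ∀ i ∈ S, MeasurableSet (f i)) {t : Set α} (ht : μ t ≠ ⊤) :
    ∑ i ∈ S, μ.real (f i ∩ t) ≤ μ.real t := by
  have : IsFiniteMeasure (μ.restrict t) := isFiniteMeasure_restrict.2 ht
  calc ∑ i ∈ S, μ.real (f i ∩ t) = ∑ i ∈ S, (μ.restrict t).real (f i) :=
        Finset.sum_congr rfl fun i hi ↦ (measureReal_restrict_apply (hm i hi)).symm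
    _ ≤ (μ.restrict t).real univ := sum_measureReal_le_measureReal_univ hm hd
    _ = μ.real t := measureReal_restrict_apply_univ t

theorem sum_volume_real_inter_Ioc_pred {R : ℕ → ℝ} (hR : Monotone R) {s : Set ℝ}
    (hs : MeasurableSet s) (n : ℕ) :
    ∑ j ∈ Finset.Icc 1 n, volume.real (s ∩ Ioc (R (j - 1)) (R j)) =
      volume.real (s ∩ Ioc (R 0) (R n)) := by
  have hfin : ∀ a b, volume (s ∩ Ioc a b) ≠ ⊤ := fun _ _ ↦
    measure_ne_top_of_subset inter_subset_right measure_Ioc_lt_top.ne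
  induction n with
  | zero => simp
  | succ n ih =>
    have hdisj : Disjoint (s ∩ Ioc (R 0) (R n)) (s ∩ Ioc (R n) (R (n + 1))) :=
      (Ioc_disjoint_Ioc_of_le le_rfl).mono inter_subset_right inter_subset_right
    rw [Finset.sum_Icc_succ_top (by omega), ih, Nat.add_sub_cancel,
      ← measureReal_union hdisj (hs.inter measurableSet_Ioc) (hfin _ _) (hfin _ _),
      ← inter_union_distrib_left, Ioc_union_Ioc_eq_Ioc (hR n.zero_le) (hR n.le_succ)]

theorem lt_and_lt_of_measureReal_Ioc_inter_Ioc_pos {α : Type*} [LinearOrder α]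
    [MeasurableSpace α] {μ : Measure α} {a b u v : α} (h : 0 < μ.real (Ioc a b ∩ Ioc u v)) :
    a < v ∧ u < b := by
  obtain ⟨x, ⟨hax, hxb⟩, hux, hxv⟩ := nonempty_of_measureReal_ne_zero h.ne'
  exact ⟨hax.trans_le hxv, hux.trans_le hxb⟩

theorem cumBW_zero (B : ℕ → ℝ) : cumBW B 0 = 0 := by
  simp [cumBW]

theorem cumBW_succ (B : ℕ → ℝ) (n : ℕ) : cumBW B (n + 1) = cumBW B n + B (n + 1) :=
  Finset.sum_Icc_succ_top (by omega) B

theorem cumBW_monotone {B : ℕ → ℝ} (hB : ∀ j, 1 ≤ j → 0 ≤ B j) : Monotone (cumBW B) :=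
  monotone_nat_of_le_succ fun n ↦ by
    rw [cumBW_succ]
    linarith [hB (n + 1) n.succ_pos]

theorem cumBW_sub_pred {B : ℕ → ℝ} {j : ℕ} (hj : 1 ≤ j) : cumBW B j - cumBW B (j - 1) = B j := by
  obtain ⟨n, rfl⟩ := Nat.exists_eq_add_of_le' hj
  rw [Nat.add_sub_cancel, cumBW_succ]
  ring

section Chunks

variable {α : Type*} [LinearOrder α] {Y : ℝ} {S : Finset α} {i i' : α}

def chunkEnd (Y : ℝ) (S : Finset α) (i : α) : ℝ := Y * (S.filter (fun k => k ≤ i)).card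

def chunkSegment (Y : ℝ) (S : Finset α) (i : α) : Set ℝ :=
  Ioc (chunkEnd Y S i - Y) (chunkEnd Y S i)

theorem le_chunkEnd (hY : 0 ≤ Y) (hi : i ∈ S) : Y ≤ chunkEnd Y S i := by
  have : 1 ≤ (S.filter (fun k => k ≤ i)).card := Finset.card_pos.2 ⟨i, by simp [hi]⟩
  exact le_mul_of_one_le_right hY (by exact_mod_cast this)

theorem chunkEnd_add_le (hY : 0 ≤ Y) (hi' : i' ∈ S) (h : i < i') :
    chunkEnd Y S i + Y ≤ chunkEnd Y S i' := by
  have hss : S.filter (fun k => k ≤ i) ⊂ S.filter (fun k => k ≤ i') :=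
    (Finset.ssubset_iff_of_subset (Finset.monotone_filter_right S fun _ _ hk ↦ hk.trans h.le)).2
      ⟨i', by simp [hi'], by simp [h]⟩
  have hcard : ((S.filter (fun k => k ≤ i)).card : ℝ) + 1 ≤ (S.filter (fun k => k ≤ i')).card :=
    by exact_mod_cast Finset.card_lt_card hss
  unfold chunkEnd
  nlinarith

theorem chunkEnd_max' (hS : S.Nonempty) : chunkEnd Y S (S.max' hS) = Y * S.card := by
  rw [chunkEnd, Finset.filter_true_of_mem fun k hk ↦ S.le_max' k hk]

theorem pairwiseDisjoint_chunkSegment (hY : 0 ≤ Y) :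
    (S : Set α).PairwiseDisjoint (chunkSegment Y S) := by
  have disjoint_of_lt : ∀ {i i'}, i' ∈ S → i < i' →
      Disjoint (chunkSegment Y S i) (chunkSegment Y S i') :=
    fun hi' h ↦ Ioc_disjoint_Ioc_of_le (by linarith [chunkEnd_add_le hY hi' h])
  intro i hi i' hi' hne
  rcases hne.lt_or_gt with h | h
  · exact disjoint_of_lt hi' h
  · exact (disjoint_of_lt hi h).symm

end Chunks

section Schedule

variable {α : Type*} [LinearOrder α] {Y : ℝ} {R : ℕ → ℝ} {S : Finset α} {i i' : α} {j j' n : ℕ}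

/-- For `j = 0` the slot segment is empty, since `0 - 1 = 0` in `ℕ`. -/
noncomputable def inOrderSchedule (Y : ℝ) (R : ℕ → ℝ) (S : Finset α) (i : α) (j : ℕ) : ℝ :=
  volume.real (chunkSegment Y S i ∩ Ioc (R (j - 1)) (R j))

theorem inOrderSchedule_nonneg : 0 ≤ inOrderSchedule Y R S i j :=
  measureReal_nonneg

theorem inOrderSchedule_zero : inOrderSchedule Y R S i 0 = 0 := by
  simp [inOrderSchedule]

theorem inOrderSchedule_eq_zero (hR : Monotone R) (hend : chunkEnd Y S i ≤ R n) (hj : n < j) :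
    inOrderSchedule Y R S i j = 0 := by
  rw [inOrderSchedule, chunkSegment,
    (Ioc_disjoint_Ioc_of_le (hend.trans (hR (Nat.le_sub_one_of_lt hj)))).inter_eq,
    measureReal_empty]

theorem sum_inOrderSchedule (hY : 0 ≤ Y) (hR : Monotone R) (hstart : R 0 ≤ chunkEnd Y S i - Y)
    (hend : chunkEnd Y S i ≤ R n) : ∑ j ∈ Finset.Icc 1 n, inOrderSchedule Y R S i j = Y := by
  unfold inOrderSchedule chunkSegment
  rw [sum_volume_real_inter_Ioc_pred hR measurableSet_Ioc,
    inter_eq_left.2 (Ioc_subset_Ioc hstart hend), Real.volume_real_Ioc_of_le (by linarith)]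
  ring

theorem sum_inOrderSchedule_le (hY : 0 ≤ Y) (hR : Monotone R) (j : ℕ) :
    ∑ i ∈ S, inOrderSchedule Y R S i j ≤ R j - R (j - 1) :=
  calc ∑ i ∈ S, inOrderSchedule Y R S i j ≤ volume.real (Ioc (R (j - 1)) (R j)) :=
        sum_measureReal_inter_le (pairwiseDisjoint_chunkSegment hY)
          (fun _ _ ↦ measurableSet_Ioc) measure_Ioc_lt_top.ne
    _ = R j - R (j - 1) := Real.volume_real_Ioc_of_le (hR (Nat.sub_le j 1))

theorem le_of_inOrderSchedule_pos (hY : 0 ≤ Y) (hR : Monotone R) (hi' : i' ∈ S) (h : i < i')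
    (hz : 0 < inOrderSchedule Y R S i j) (hz' : 0 < inOrderSchedule Y R S i' j') : j ≤ j' := by
  by_contra! hlt
  have h₁ := (lt_and_lt_of_measureReal_Ioc_inter_Ioc_pos hz).2
  have h₂ := (lt_and_lt_of_measureReal_Ioc_inter_Ioc_pos hz').1
  linarith [hR (Nat.le_sub_one_of_lt hlt), chunkEnd_add_le hY hi' h]

end Schedule

theorem feasible_schedule_in_order_general
    (Y : ℝ) (hY : 0 < Y)
    (d : ℕ → ℕ)
    (B : ℕ → ℝ) (hB : ∀ j, 1 ≤ j → 0 ≤ B j)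
    (η : ℝ) (hη : 0 ≤ η)
    (S : Finset ℕ)
    (h : ∀ i ∈ S,
      Y * ((S.filter (fun k => k ≤ i)).card : ℝ) ≤ min η (cumBW B (d i))) :
    ∃ z : ℕ → ℕ → ℝ,
      (∀ i ∈ S, ∀ j, 0 ≤ z i j) ∧
      (∀ i ∈ S, ∑ j ∈ Finset.Icc 1 (d i), z i j = Y) ∧
      (∀ i ∈ S, ∀ j, (j < 1 ∨ d i < j) → z i j = 0) ∧
      (∀ j, 1 ≤ j → ∑ i ∈ S, z i j ≤ B j) ∧
      (∑ i ∈ S, ∑ j ∈ Finset.Icc 1 (d i), z i j ≤ η) ∧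
      (∀ i ∈ S, ∀ i' ∈ S, ∀ j j', i < i' → 0 < z i j → 0 < z i' j' → j ≤ j') := by
  have hR := cumBW_monotone hB
  have hstart : ∀ i ∈ S, cumBW B 0 ≤ chunkEnd Y S i - Y := fun i hi ↦ by
    linarith [cumBW_zero B, le_chunkEnd hY.le hi]
  have hend : ∀ i ∈ S, chunkEnd Y S i ≤ cumBW B (d i) := fun i hi ↦
    (h i hi).trans (min_le_right _ _)
  have hsum : ∀ i ∈ S, ∑ j ∈ Finset.Icc 1 (d i), inOrderSchedule Y (cumBW B) S i j = Y :=
    fun i hi ↦ sum_inOrderSchedule hY.le hR (hstart i hi) (hend i hi)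
  refine ⟨inOrderSchedule Y (cumBW B) S, fun _ _ _ ↦ inOrderSchedule_nonneg, hsum, ?_, ?_, ?_,
    fun i _ i' hi' j j' hlt ↦ le_of_inOrderSchedule_pos hY.le hR hi' hlt⟩
  · rintro i hi j (hj | hj)
    · rw [Nat.lt_one_iff.1 hj, inOrderSchedule_zero]
    · exact inOrderSchedule_eq_zero hR (hend i hi) hj
  · exact fun j hj ↦ (sum_inOrderSchedule_le hY.le hR j).trans_eq (cumBW_sub_pred hj)
  · rw [Finset.sum_congr rfl hsum, Finset.sum_const, nsmul_eq_mul, mul_comm]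
    rcases S.eq_empty_or_nonempty with rfl | hne
    · simpa using hη
    · rw [← chunkEnd_max' hne]
      exact (h _ (S.max'_mem hne)).trans (min_le_left _ _)

/-- If `Y·|S ∩ {1,…,i}| ≤ min(η, R(d(i)))` for every `i ∈ S`, then `S` admits a
feasible single-link schedule, and moreover one in which the chunks of `S` are
downloaded in increasing index order. -/
theorem feasible_schedule_in_order
    (C : ℕ) (Y : ℝ) (hY : 0 < Y)
    (d : ℕ → ℕ) (hd : Monotone d)
    (B : ℕ → ℝ) (hB : ∀ j, 1 ≤ j → 0 ≤ B j)
    (η : ℝ) (hη : 0 ≤ η)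
    (S : Finset ℕ) (hS : S ⊆ Finset.Icc 1 C)
    (h : ∀ i ∈ S,
      Y * ((S.filter (fun k => k ≤ i)).card : ℝ) ≤ min η (cumBW B (d i))) :
    ∃ z : ℕ → ℕ → ℝ,
      (∀ i ∈ S, ∀ j, 0 ≤ z i j) ∧
      (∀ i ∈ S, ∑ j ∈ Finset.Icc 1 (d i), z i j = Y) ∧
      (∀ i ∈ S, ∀ j, (j < 1 ∨ d i < j) → z i j = 0) ∧
      (∀ j, 1 ≤ j → ∑ i ∈ S, z i j ≤ B j) ∧
      (∑ i ∈ S, ∑ j ∈ Finset.Icc 1 (d i), z i j ≤ η) ∧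
      (∀ i ∈ S, ∀ i' ∈ S, ∀ j j', i < i' → 0 < z i j → 0 < z i' j' → j ≤ j') :=
  feasible_schedule_in_order_general Y hY d B hB η hη S h
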